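/- The map ψ on M₃(ℂ) defined by keeping diagonal entries fixed and multiplying off-diagonal entries by −½ (ψ(a)_{ii} = a_{ii}, ψ(a)_{ij} = −½ a_{ij} for i ≠ j) is a positive, trace-preserving, unital linear map. -/

import Mathlib

/-!
`ψ` is Schur (entrywise) multiplication by the matrix `C` with `C i i = 1` and `C i j = -1/2`
for `i ≠ j`. This `C` is half the Laplacian of the triangle, `½ ∑_{i<j} (eᵢ - eⱼ)(eᵢ - eⱼ)*`, so it
is positive semidefinite and the Schur product theorem makes `ψ` positive. Linearity is that of
the Hadamard product, and the unit diagonal of `C` gives unitality and trace preservation.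
-/

open ComplexOrder

noncomputable def psiMap (a : Matrix (Fin 3) (Fin 3) ℂ) : Matrix (Fin 3) (Fin 3) ℂ :=
  Matrix.of fun i j => if i = j then a i j else -(1 / 2 : ℂ) * a i j

namespace Matrix

variable {m n α : Type*}

theorem isLinearMap_hadamard_left [CommSemiring α] (C : Matrix m n α) :
    IsLinearMap α (C ⊙ ·) :=
  ⟨fun A B => hadamard_add C A B, fun k A => hadamard_smul C A k⟩

theorem trace_hadamard_of_diag_eq_one [Fintype n] [NonAssocSemiring α] {C : Matrix n n α}
    (hC : C.diag = 1) (A : Matrix n n α) : trace (C ⊙ A) = trace A := by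
  refine Finset.sum_congr rfl fun i _ => ?_
  rw [diag_apply, diag_apply, hadamard_apply, ← diag_apply C, hC, Pi.one_apply, one_mul]

end Matrix

open Matrix

noncomputable def psiMultiplier : Matrix (Fin 3) (Fin 3) ℂ :=
  of fun i j => if i = j then 1 else -(1 / 2)

theorem psiMap_eq_hadamard (a : Matrix (Fin 3) (Fin 3) ℂ) : psiMap a = psiMultiplier ⊙ a := by
  ext i j
  by_cases h : i = j <;> simp [psiMap, psiMultiplier, hadamard_apply, h]

theorem diag_psiMultiplier : psiMultiplier.diag = 1 := by
  ext i
  simp [psiMultiplier]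

theorem psiMultiplier_eq_half_sum_vecMulVec :
    let u : Fin 3 → ℂ := ![1, -1, 0]
    let v : Fin 3 → ℂ := ![1, 0, -1]
    let w : Fin 3 → ℂ := ![0, 1, -1]
    psiMultiplier = (1 / 2 : ℂ) •
      (vecMulVec u (star u) + vecMulVec v (star v) + vecMulVec w (star w)) := by
  intro u v w
  ext i j
  simp only [psiMultiplier, of_apply, Matrix.smul_apply, Matrix.add_apply, vecMulVec_apply,
    Pi.star_apply]
  fin_cases i <;> fin_cases j <;> norm_num [u, v, w]

theorem posSemidef_psiMultiplier : psiMultiplier.PosSemidef := by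
  rw [psiMultiplier_eq_half_sum_vecMulVec]
  refine PosSemidef.smul ?_ (by positivity)
  exact ((posSemidef_vecMulVec_self_star _).add (posSemidef_vecMulVec_self_star _)).add
    (posSemidef_vecMulVec_self_star _)

/-- The map `ψ` is a positive, trace-preserving, unital linear map on `M₃(ℂ)`. -/
theorem stmt_12 :
    IsLinearMap ℂ psiMap ∧
    (∀ a : Matrix (Fin 3) (Fin 3) ℂ, Matrix.trace (psiMap a) = Matrix.trace a) ∧
    psiMap 1 = 1 ∧
    (∀ a : Matrix (Fin 3) (Fin 3) ℂ, a.PosSemidef → (psiMap a).PosSemidef) := by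
  rw [show psiMap = (psiMultiplier ⊙ ·) from funext psiMap_eq_hadamard]
  exact ⟨isLinearMap_hadamard_left psiMultiplier, trace_hadamard_of_diag_eq_one diag_psiMultiplier,
    hadamard_one_eq_one_iff.mpr diag_psiMultiplier, fun _ => posSemidef_psiMultiplier.hadamard⟩
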